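/- arXiv:1002.3722 — 5 statements merged into one kernel-verified Lean document; each statement's English description precedes it below -/
import Mathlib

section
/- For every ν > 0 there exists C > 0 such that for all ε ∈ (0,1] and k ∈ ℤ, k ≠ 0: ∫₀^∞ e^{-2νk²t}(1 - e^{-ε²k⁴t})² dt ≤ C · min(k⁻², ε⁴k²). -/
/-!
Write `r = 2νk²` and `c = ε²k⁴`. Since `0 ≤ 1 - e^{-ct} ≤ min 1 (ct)`, the integral is at
most both `∫ e^{-rt} = 1/r = k⁻²/(2ν)` and `c² ∫ t² e^{-rt} = 2c²/r³ = ε⁴k²/(4ν³)`.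
-/

open MeasureTheory Real Set

open scoped Nat

lemma integrableOn_pow_mul_exp_neg_mul_Ioi (n : ℕ) {r : ℝ} (hr : 0 < r) :
    IntegrableOn (fun t : ℝ ↦ t ^ n * exp (-(r * t))) (Ioi 0) := by
  refine (integrableOn_rpow_mul_exp_neg_mul_rpow (s := n)
    (neg_one_lt_zero.trans_le n.cast_nonneg) one_pos hr).congr_fun
    (fun t _ ↦ ?_) measurableSet_Ioi
  simp [rpow_natCast]

lemma integral_pow_mul_exp_neg_mul_Ioi (n : ℕ) {r : ℝ} (hr : 0 < r) :
    ∫ t in Ioi (0 : ℝ), t ^ n * exp (-(r * t)) = n ! / r ^ (n + 1) := by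
  have h := integral_rpow_mul_exp_neg_mul_Ioi (a := n + 1) (by positivity) hr
  rw [Gamma_nat_eq_factorial, add_sub_cancel_right, ← Nat.cast_add_one, rpow_natCast] at h
  simp_rw [rpow_natCast] at h
  rw [h, one_div, inv_pow]
  ring

lemma one_sub_exp_neg_nonneg {x : ℝ} (hx : 0 ≤ x) : 0 ≤ 1 - exp (-x) := by
  simpa using exp_le_one_iff.mpr (neg_nonpos.mpr hx)

lemma one_sub_exp_neg_le (x : ℝ) : 1 - exp (-x) ≤ x := by
  linarith [add_one_le_exp (-x)]

section

variable {r c : ℝ}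

lemma integral_exp_neg_mul_mul_one_sub_exp_neg_sq_le_one_div (hr : 0 < r) (hc : 0 ≤ c) :
    ∫ t in Ioi (0 : ℝ), exp (-(r * t)) * (1 - exp (-(c * t))) ^ 2 ≤ 1 / r := by
  calc ∫ t in Ioi (0 : ℝ), exp (-(r * t)) * (1 - exp (-(c * t))) ^ 2
      ≤ ∫ t in Ioi (0 : ℝ), t ^ 0 * exp (-(r * t)) := by
        refine integral_mono_of_nonneg (ae_of_all _ fun t ↦ by positivity)
          (integrableOn_pow_mul_exp_neg_mul_Ioi 0 hr) ?_
        filter_upwards [ae_restrict_mem measurableSet_Ioi] with t ht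
        have h₀ := one_sub_exp_neg_nonneg (mul_nonneg hc (le_of_lt ht))
        have h₁ : (1 - exp (-(c * t))) ^ 2 ≤ 1 :=
          pow_le_one₀ h₀ (by linarith [exp_pos (-(c * t))])
        simpa using mul_le_of_le_one_right (exp_pos _).le h₁
    _ = 1 / r := by simpa using integral_pow_mul_exp_neg_mul_Ioi 0 hr

lemma integral_exp_neg_mul_mul_one_sub_exp_neg_sq_le_two_mul_sq_div (hr : 0 < r)
    (hc : 0 ≤ c) :
    ∫ t in Ioi (0 : ℝ), exp (-(r * t)) * (1 - exp (-(c * t))) ^ 2 ≤ 2 * c ^ 2 / r ^ 3 := by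
  calc ∫ t in Ioi (0 : ℝ), exp (-(r * t)) * (1 - exp (-(c * t))) ^ 2
      ≤ ∫ t in Ioi (0 : ℝ), c ^ 2 * (t ^ 2 * exp (-(r * t))) := by
        refine integral_mono_of_nonneg (ae_of_all _ fun t ↦ by positivity)
          ((integrableOn_pow_mul_exp_neg_mul_Ioi 2 hr).const_mul _) ?_
        filter_upwards [ae_restrict_mem measurableSet_Ioi] with t ht
        have h₀ := one_sub_exp_neg_nonneg (mul_nonneg hc (le_of_lt ht))
        have h₁ := pow_le_pow_left₀ h₀ (one_sub_exp_neg_le (c * t)) 2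
        calc exp (-(r * t)) * (1 - exp (-(c * t))) ^ 2 ≤ exp (-(r * t)) * (c * t) ^ 2 := by gcongr
          _ = c ^ 2 * (t ^ 2 * exp (-(r * t))) := by ring
    _ = 2 * c ^ 2 / r ^ 3 := by
        rw [integral_const_mul, integral_pow_mul_exp_neg_mul_Ioi 2 hr]
        norm_num
        ring

end

theorem stmt_5 (ν : ℝ) (hν : 0 < ν) :
    ∃ C > 0, ∀ (ε : ℝ), ε ∈ Set.Ioc (0 : ℝ) 1 → ∀ (k : ℤ), k ≠ 0 →
      ∫ t in Set.Ioi (0 : ℝ),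
          Real.exp (-2 * ν * (k : ℝ) ^ 2 * t) *
            (1 - Real.exp (-ε ^ 2 * (k : ℝ) ^ 4 * t)) ^ 2
        ≤ C * min (((k : ℝ) ^ 2)⁻¹) (ε ^ 4 * (k : ℝ) ^ 2) := by
  refine ⟨max (1 / (2 * ν)) (1 / (4 * ν ^ 3)), by positivity, fun ε hε k hk ↦ ?_⟩
  have hk : (0 : ℝ) < (k : ℝ) ^ 2 := by positivity
  have hε : 0 < ε := hε.1
  simp only [neg_mul]
  rw [mul_min_of_nonneg _ _ (by positivity)]
  refine le_min ?_ ?_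
  · calc _ ≤ 1 / (2 * ν * (k : ℝ) ^ 2) :=
          integral_exp_neg_mul_mul_one_sub_exp_neg_sq_le_one_div (by positivity) (by positivity)
      _ = 1 / (2 * ν) * ((k : ℝ) ^ 2)⁻¹ := by field_simp
      _ ≤ _ := by gcongr; exact le_max_left _ _
  · calc _ ≤ 2 * (ε ^ 2 * (k : ℝ) ^ 4) ^ 2 / (2 * ν * (k : ℝ) ^ 2) ^ 3 :=
          integral_exp_neg_mul_mul_one_sub_exp_neg_sq_le_two_mul_sq_div (by positivity)
            (by positivity)
      _ = 1 / (4 * ν ^ 3) * (ε ^ 4 * (k : ℝ) ^ 2) := by field_simp; ring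
      _ ≤ _ := by gcongr; exact le_max_right _ _
end

section
/- For ν > 0 define σ_k = k²/(1 + νk² + ε²k⁴) and σ̂_k = 1/(ν + ε²k²) for k ∈ ℤ and ε ∈ (0,1]. Then there exists C > 0 (depending only on ν) such that |σ_k − σ̂_k| ≤ C/(1 + k²) for all k ∈ ℤ and all ε ∈ (0,1]. -/
/-! The difference has the closed form `σ_k - σ̂_k = -1 / ((1 + νk² + ε²k⁴)(ν + ε²k²))`, because
`k²(ν + ε²k²) = νk² + ε²k⁴`. Dropping the `ε`-terms from both factors bounds its size by
`1 / (ν(1 + νk²))`, and `min 1 ν · (1 + k²) ≤ 1 + νk²` turns this into `C / (1 + k²)` with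
`C = 1 / (ν · min 1 ν)`, uniformly in `ε`. -/

lemma sq_div_sub_one_div_eq {ν : ℝ} (hν : 0 < ν) (ε x : ℝ) :
    x ^ 2 / (1 + ν * x ^ 2 + ε ^ 2 * x ^ 4) - 1 / (ν + ε ^ 2 * x ^ 2)
      = -(1 / ((1 + ν * x ^ 2 + ε ^ 2 * x ^ 4) * (ν + ε ^ 2 * x ^ 2))) := by
  have hA : 1 + ν * x ^ 2 + ε ^ 2 * x ^ 4 ≠ 0 := by positivity
  have hB : ν + ε ^ 2 * x ^ 2 ≠ 0 := by positivity
  field_simp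
  ring

lemma abs_sq_div_sub_one_div_le {ν : ℝ} (hν : 0 < ν) (ε x : ℝ) :
    |x ^ 2 / (1 + ν * x ^ 2 + ε ^ 2 * x ^ 4) - 1 / (ν + ε ^ 2 * x ^ 2)|
      ≤ 1 / ((1 + ν * x ^ 2) * ν) := by
  rw [sq_div_sub_one_div_eq hν, abs_neg, abs_of_nonneg (by positivity)]
  apply one_div_le_one_div_of_le (by positivity)
  exact mul_le_mul (le_add_of_nonneg_right (by positivity))
    (le_add_of_nonneg_right (by positivity)) hν.le (by positivity)

lemma one_div_one_add_mul_mul_le {ν : ℝ} (hν : 0 < ν) {t : ℝ} (ht : 0 ≤ t) :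
    1 / ((1 + ν * t) * ν) ≤ 1 / (ν * min 1 ν) / (1 + t) := by
  have hmin : min 1 ν * (1 + t) ≤ 1 + ν * t := by
    nlinarith [min_le_left 1 ν, min_le_right 1 ν]
  rw [div_div, mul_assoc, mul_comm (1 + ν * t)]
  gcongr

theorem stmt_6 (ν : ℝ) (hν : 0 < ν) :
    ∃ C > 0, ∀ (ε : ℝ), ε ∈ Set.Ioc (0 : ℝ) 1 → ∀ (k : ℤ),
      |(k : ℝ) ^ 2 / (1 + ν * (k : ℝ) ^ 2 + ε ^ 2 * (k : ℝ) ^ 4)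
          - 1 / (ν + ε ^ 2 * (k : ℝ) ^ 2)|
        ≤ C / (1 + (k : ℝ) ^ 2) := by
  refine ⟨1 / (ν * min 1 ν), by positivity, fun ε _ k => ?_⟩
  exact (abs_sq_div_sub_one_div_le hν ε k).trans
    (one_div_one_add_mul_mul_le hν (sq_nonneg _))
end

section
/- Let ν > 0 and for ε ∈ (0,1] set σ̂_k = 1/(ν + ε²k²). Then there exists C > 0 such that |π/√ν − Σ_{k∈ℤ} ε·σ̂_k| ≤ C·ε for all ε ∈ (0,1]. -/
/-
For an even `f` that is nonnegative, integrable and antitone on `[0, ∞)`, the integral test applied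
to `x ↦ ε f(εx)` traps the one-sided Riemann sum `∑_{n ≥ 0} ε f(εn)` between `∫_0^∞ f` and
`ε f(0) + ∫_0^∞ f`. Doubling and subtracting the `k = 0` term, the two-sided sum is within `ε f(0)`
of `∫ f`. For `f x = (ν + x²)⁻¹` this gives the bound with `C = 1/ν`, since `∫ f = π/√ν`.
-/

open Real Set MeasureTheory

section RiemannSum

variable {f : ℝ → ℝ} {ε : ℝ}

lemma AntitoneOn.const_mul_comp_mul (hf : AntitoneOn f (Ici 0)) (hε : 0 < ε) :
    AntitoneOn (fun x ↦ ε * f (ε * x)) (Ici 0) := by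
  intro a ha b hb hab
  have hεa : ε * a ∈ Ici 0 := mul_nonneg hε.le ha
  have hεb : ε * b ∈ Ici 0 := mul_nonneg hε.le hb
  exact mul_le_mul_of_nonneg_left (hf hεa hεb (by gcongr)) hε.le

lemma MeasureTheory.IntegrableOn.const_mul_comp_mul_Ioi_zero (hf : IntegrableOn f (Ioi 0))
    (hε : 0 < ε) : IntegrableOn (fun x ↦ ε * f (ε * x)) (Ioi 0) :=
  ((integrableOn_Ioi_comp_mul_left_iff f 0 hε).mpr (by rwa [mul_zero])).const_mul ε

lemma integral_Ioi_zero_const_mul_comp_mul (f : ℝ → ℝ) (hε : 0 < ε) :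
    ∫ x in Ioi 0, ε * f (ε * x) = ∫ x in Ioi 0, f x := by
  rw [integral_const_mul, ← smul_eq_mul, integral_comp_mul_left_Ioi' f 0 hε, mul_zero]

theorem AntitoneOn.riemannSum_bounds (anti : AntitoneOn f (Ici 0))
    (integrable : IntegrableOn f (Ioi 0)) (nonneg : ∀ t ∈ Ioi 0, 0 ≤ f t) (hε : 0 < ε) :
    Summable (fun n : ℕ ↦ ε * f (ε * n)) ∧
      ∫ x in Ioi 0, f x ≤ ∑' n : ℕ, ε * f (ε * n) ∧
      ∑' n : ℕ, ε * f (ε * n) ≤ ε * f 0 + ∫ x in Ioi 0, f x := by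
  have anti' := anti.const_mul_comp_mul hε
  have integrable' := integrable.const_mul_comp_mul_Ioi_zero hε
  have nonneg' : ∀ t ∈ Ioi (0 : ℝ), 0 ≤ ε * f (ε * t) :=
    fun t ht ↦ mul_nonneg hε.le (nonneg _ (mul_pos hε ht))
  have summable := anti'.summable_of_integrableOn_Ioi_zero integrable' nonneg'
  refine ⟨summable, ?_, ?_⟩
  · simpa [integral_Ioi_zero_const_mul_comp_mul f hε] using
      anti'.integral_le_tsum summable nonneg'
  · simpa [integral_Ioi_zero_const_mul_comp_mul f hε] using
      anti'.tsum_le_integral integrable' nonneg'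

lemma Function.Even.tsum_int_eq {G : Type*} [AddCommGroup G] [TopologicalSpace G]
    [IsTopologicalAddGroup G] [T2Space G] {g : ℤ → G} (hg : g.Even)
    (hs : Summable fun n : ℕ ↦ g n) : ∑' k : ℤ, g k = 2 • ∑' n : ℕ, g n - g 0 := by
  have hneg : (fun n : ℕ ↦ g (-n)) = fun n : ℕ ↦ g n := funext fun n ↦ hg n
  rw [Summable.tsum_of_nat_of_neg hs (hneg ▸ hs), hneg, two_nsmul]

theorem Function.Even.abs_integral_sub_tsum_riemannSum_le (heven : f.Even)
    (anti : AntitoneOn f (Ici 0)) (integrable : Integrable f) (nonneg : 0 ≤ f) (hε : 0 < ε) :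
    |(∫ x, f x) - ∑' k : ℤ, ε * f (ε * k)| ≤ ε * f 0 := by
  obtain ⟨summable, lower, upper⟩ :=
    anti.riemannSum_bounds integrable.integrableOn (fun t _ ↦ nonneg t) hε
  have hsum : ∑' k : ℤ, ε * f (ε * k) = 2 * ∑' n : ℕ, ε * f (ε * n) - ε * f 0 := by
    have := Function.Even.tsum_int_eq (g := fun k : ℤ ↦ ε * f (ε * k))
      (fun k ↦ by simp only [Int.cast_neg, mul_neg, heven (ε * k)]) (by exact_mod_cast summable)
    simpa [two_nsmul, two_mul] using this
  have hint : ∫ x, f x = 2 * ∫ x in Ioi 0, f x := by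
    rw [← integral_comp_abs]
    exact integral_congr_ae (Filter.Eventually.of_forall fun x ↦ by
      rcases abs_choice x with h | h <;> simp [h, heven x])
  rw [hsum, hint, abs_le]
  constructor <;> linarith

end RiemannSum

lemma inv_add_sq_eq_inv_mul_inv_one_add_div_sq {ν : ℝ} (hν : 0 < ν) (x : ℝ) :
    (ν + x ^ 2)⁻¹ = ν⁻¹ * (1 + (x / √ν) ^ 2)⁻¹ := by
  rw [div_pow, sq_sqrt hν.le, ← mul_inv, mul_add, mul_one, mul_div_cancel₀ _ hν.ne']

lemma integrable_inv_add_sq {ν : ℝ} (hν : 0 < ν) : Integrable fun x : ℝ ↦ (ν + x ^ 2)⁻¹ := by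
  simp_rw [inv_add_sq_eq_inv_mul_inv_one_add_div_sq hν]
  exact (integrable_inv_one_add_sq.comp_div (sqrt_pos.mpr hν).ne').const_mul ν⁻¹

lemma integral_inv_add_sq {ν : ℝ} (hν : 0 < ν) : ∫ x, (ν + x ^ 2)⁻¹ = π / √ν := by
  simp_rw [inv_add_sq_eq_inv_mul_inv_one_add_div_sq hν, integral_const_mul,
    Measure.integral_comp_div (fun y : ℝ ↦ (1 + y ^ 2)⁻¹), integral_univ_inv_one_add_sq,
    abs_of_pos (sqrt_pos.mpr hν), smul_eq_mul]
  have hs := sqrt_pos.mpr hν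
  field_simp
  rw [sq_sqrt hν.le]

lemma antitoneOn_inv_add_sq {ν : ℝ} (hν : 0 < ν) :
    AntitoneOn (fun x : ℝ ↦ (ν + x ^ 2)⁻¹) (Ici 0) := by
  intro a ha b _ hab
  have ha : 0 ≤ a := ha
  dsimp only
  gcongr

theorem stmt_7 (ν : ℝ) (hν : 0 < ν) :
    ∃ C > 0, ∀ (ε : ℝ), ε ∈ Set.Ioc (0 : ℝ) 1 →
      |Real.pi / Real.sqrt ν - ∑' k : ℤ, ε * (ν + ε ^ 2 * (k : ℝ) ^ 2)⁻¹|
        ≤ C * ε := by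
  refine ⟨ν⁻¹, inv_pos.mpr hν, fun ε hε ↦ ?_⟩
  have := Function.Even.abs_integral_sub_tsum_riemannSum_le (f := fun x : ℝ ↦ (ν + x ^ 2)⁻¹)
    (fun x ↦ by simp) (antitoneOn_inv_add_sq hν) (integrable_inv_add_sq hν)
    (fun x ↦ by positivity) hε.1
  simpa [integral_inv_add_sq hν, mul_pow, mul_comm ε ν⁻¹] using this
end

section
/- For every α ∈ (1/2, 3/2), α ≠ 1/2, ν > 0 there exists C > 0 such that for all ε ∈ (0,1]: Σ_{k∈ℤ, k≠0} |k|^{2α}/(1 + νk² + ε²k⁴) ≤ C·ε^{1−2α}. -/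
/-!
Each term is at most `min (|k|^(2α-2) / ν, |k|^(2α-4) / ε²)`. Cutting the sum at `N = ⌈1/ε⌉`,
the first bound controls the head, `∑_{n ≤ N} n^(2α-2) ≲ N^(2α-1)`, and the second the tail,
`ε⁻² ∑_{n > N} n^(2α-4) ≲ ε⁻² N^(2α-3)`; both are of order `ε^(1-2α)`. The power sums are compared
with `∫ x^(s-1) dx = x^s / s`.
-/

open Real Finset

lemma sum_range_add_one_rpow_sub_one_le_of_le_one {s : ℝ} (hs₀ : 0 < s) (hs₁ : s ≤ 1) (N : ℕ) :
    ∑ i ∈ range N, ((i : ℝ) + 1) ^ (s - 1) ≤ (N : ℝ) ^ s / s := by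
  have term_le_increment (i : ℕ) : ((i : ℝ) + 1) ^ (s - 1) ≤ (((i : ℝ) + 1) ^ s - (i : ℝ) ^ s) / s := by
    have := (concaveOn_rpow hs₀.le hs₁).le_slope_of_hasDerivAt (x := i) (y := i + 1)
      (Set.mem_Ici.mpr (Nat.cast_nonneg i)) (Set.mem_Ici.mpr (by positivity)) (by linarith)
      (hasDerivAt_rpow_const (Or.inl (by positivity)))
    rw [slope_def_field, add_sub_cancel_left, div_one] at this
    rw [le_div_iff₀ hs₀]
    linarith
  calc ∑ i ∈ range N, ((i : ℝ) + 1) ^ (s - 1)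
      ≤ ∑ i ∈ range N, ((((i + 1 : ℕ) : ℝ)) ^ s - (i : ℝ) ^ s) / s := by
        gcongr with i; push_cast; exact term_le_increment i
    _ = (N : ℝ) ^ s / s := by
        rw [← sum_div, sum_range_sub (fun i : ℕ => (i : ℝ) ^ s), Nat.cast_zero,
          zero_rpow hs₀.ne', sub_zero]

lemma sum_range_add_one_rpow_sub_one_le {s : ℝ} (hs : 0 < s) (N : ℕ) :
    ∑ i ∈ range N, ((i : ℝ) + 1) ^ (s - 1) ≤ (1 / s + 1) * (N : ℝ) ^ s := by
  have hNs : 0 ≤ (N : ℝ) ^ s := by positivity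
  have hs' : 0 ≤ 1 / s := by positivity
  rcases le_or_gt s 1 with hs₁ | hs₁
  · calc _ ≤ (N : ℝ) ^ s / s := sum_range_add_one_rpow_sub_one_le_of_le_one hs hs₁ N
      _ ≤ (1 / s + 1) * (N : ℝ) ^ s := by rw [div_eq_mul_one_div, mul_comm]; nlinarith
  · calc ∑ i ∈ range N, ((i : ℝ) + 1) ^ (s - 1)
        ≤ ∑ _i ∈ range N, (N : ℝ) ^ (s - 1) := by
          gcongr with i hi
          exact_mod_cast mem_range.mp hi
      _ = (N : ℝ) ^ s := by
          rcases N.eq_zero_or_pos with rfl | hN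
          · simp [zero_rpow hs.ne']
          · rw [sum_const, card_range, nsmul_eq_mul, rpow_sub_one (by positivity),
              mul_div_cancel₀ _ (by positivity)]
      _ ≤ (1 / s + 1) * (N : ℝ) ^ s := by nlinarith

lemma sum_range_add_add_one_rpow_sub_one_le {s x : ℝ} (hs : s < 0) (hx : 0 < x) (m : ℕ) :
    ∑ i ∈ range m, (x + ((i : ℝ) + 1)) ^ (s - 1) ≤ x ^ s / (-s) := by
  have hanti : AntitoneOn (fun y : ℝ => y ^ (s - 1)) (Set.Icc x (x + m)) :=
    fun a ha b _ hab => rpow_le_rpow_of_nonpos (hx.trans_le ha.1) hab (by linarith)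
  have hzero : (0 : ℝ) ∉ Set.uIcc x (x + m) := by
    rw [Set.uIcc_of_le (by linarith [(Nat.cast_nonneg m : (0 : ℝ) ≤ m)])]
    exact fun h => hx.not_ge h.1
  calc ∑ i ∈ range m, (x + ((i : ℝ) + 1)) ^ (s - 1)
      ≤ ∫ y in x..x + m, y ^ (s - 1) := by
        simpa only [Nat.cast_succ] using hanti.sum_le_integral
    _ = (x ^ s - (x + m) ^ s) / (-s) := by
        rw [integral_rpow (Or.inr ⟨by linarith, hzero⟩), sub_add_cancel, ← neg_sub, neg_div,
          div_neg]
    _ ≤ x ^ s / (-s) := by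
        gcongr
        · linarith
        · linarith [rpow_nonneg (by positivity : 0 ≤ x + m) s]

theorem tsum_subtype_ne_zero_eq_two_nsmul_tsum_nat_succ {G : Type*} [AddCommGroup G]
    [UniformSpace G] [IsUniformAddGroup G] [CompleteSpace G] [T2Space G] {f : ℤ → G}
    (hf : Function.Even f) (hf₀ : f 0 = 0) (hs : Summable f) :
    ∑' k : {k : ℤ // k ≠ 0}, f k = 2 • ∑' n : ℕ, f (n + 1) := by
  refine (tsum_subtype_eq_of_support_subset (s := {k : ℤ | k ≠ 0})
    fun k hk hk0 => hk (hk0 ▸ hf₀)).trans ?_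
  rw [tsum_int_eq_zero_add_two_mul_tsum_pnat hf hs, hf₀, zero_add,
    tsum_pnat_eq_tsum_succ (f := fun n : ℕ => f n)]
  push_cast
  rfl

noncomputable def dispersionTerm (r ν ε x : ℝ) : ℝ :=
  |x| ^ r / (1 + ν * x ^ 2 + ε ^ 2 * x ^ 4)

section dispersionTerm

variable {r ν ε x : ℝ}

lemma dispersionTerm_neg : dispersionTerm r ν ε (-x) = dispersionTerm r ν ε x := by
  simp [dispersionTerm, abs_neg, even_two.neg_pow, (by decide : Even 4).neg_pow]

lemma dispersionTerm_zero (hr : r ≠ 0) : dispersionTerm r ν ε 0 = 0 := by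
  simp [dispersionTerm, zero_rpow hr]

lemma dispersionTerm_nonneg (hν : 0 ≤ ν) : 0 ≤ dispersionTerm r ν ε x := by
  unfold dispersionTerm; positivity

lemma dispersionTerm_le_rpow_sub_two (hν : 0 < ν) (hx : x ≠ 0) :
    dispersionTerm r ν ε x ≤ |x| ^ (r - 2) / ν := by
  have hx' : 0 < |x| := abs_pos.mpr hx
  calc dispersionTerm r ν ε x ≤ |x| ^ r / (ν * |x| ^ 2) := by
        unfold dispersionTerm
        rw [sq_abs]
        gcongr
        nlinarith [sq_nonneg ε, pow_nonneg (sq_nonneg x) 2]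
    _ = |x| ^ (r - 2) / ν := by
        rw [rpow_sub hx', rpow_two, div_div, mul_comm]

lemma dispersionTerm_le_rpow_sub_four (hν : 0 ≤ ν) (hε : 0 < ε) (hx : x ≠ 0) :
    dispersionTerm r ν ε x ≤ |x| ^ (r - 4) / ε ^ 2 := by
  have hx' : 0 < |x| := abs_pos.mpr hx
  calc dispersionTerm r ν ε x ≤ |x| ^ r / (ε ^ 2 * |x| ^ 4) := by
        unfold dispersionTerm
        rw [(by decide : Even 4).pow_abs]
        gcongr
        nlinarith [mul_nonneg hν (sq_nonneg x)]
    _ = |x| ^ (r - 4) / ε ^ 2 := by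
        rw [rpow_sub hx', ← rpow_natCast, div_div, mul_comm]; norm_num

lemma summable_dispersionTerm_int (hr : r < 3) (hν : 0 ≤ ν) (hε : 0 < ε) :
    Summable fun k : ℤ => dispersionTerm r ν ε k := by
  refine ((summable_abs_int_rpow (b := 4 - r) (by linarith)).div_const (ε ^ 2))
    |>.of_norm_bounded_eventually ((Filter.eventually_cofinite_ne 0).mono fun k hk => ?_)
  rw [Real.norm_of_nonneg (dispersionTerm_nonneg hν), neg_sub]
  exact dispersionTerm_le_rpow_sub_four hν hε (Int.cast_ne_zero.mpr hk)

lemma tsum_dispersionTerm_nat_succ_le_of_cutoff (hr : r ∈ Set.Ioo 1 3) (hν : 0 < ν)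
    (hε : 0 < ε) {N : ℕ} (hN : 0 < N) :
    ∑' n : ℕ, dispersionTerm r ν ε (n + 1) ≤
      (1 / (r - 1) + 1) * (N : ℝ) ^ (r - 1) / ν + (N : ℝ) ^ (r - 3) / (3 - r) / ε ^ 2 := by
  have hs : Summable fun n : ℕ => dispersionTerm r ν ε (n + 1) :=
    ((summable_dispersionTerm_int hr.2 hν.le hε).comp_injective
      (i := fun n : ℕ => (n : ℤ) + 1) fun a b h => by simpa using h).congr fun n => by simp
  rw [← hs.sum_add_tsum_nat_add N]
  gcongr
  · calc ∑ i ∈ range N, dispersionTerm r ν ε (i + 1)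
        ≤ ∑ i ∈ range N, ((i : ℝ) + 1) ^ (r - 2) / ν := by
          gcongr with i
          have hpos : (0 : ℝ) < i + 1 := by positivity
          simpa [abs_of_pos hpos] using
            dispersionTerm_le_rpow_sub_two (r := r) (ε := ε) hν hpos.ne'
      _ ≤ (1 / (r - 1) + 1) * (N : ℝ) ^ (r - 1) / ν := by
          rw [← sum_div, show r - 2 = r - 1 - 1 by ring]
          gcongr
          exact sum_range_add_one_rpow_sub_one_le (by linarith [hr.1]) N
  · refine Real.tsum_le_of_sum_range_le (fun _ => dispersionTerm_nonneg hν.le) fun m => ?_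
    calc ∑ i ∈ range m, dispersionTerm r ν ε ((i + N : ℕ) + 1)
        ≤ ∑ i ∈ range m, ((N : ℝ) + ((i : ℝ) + 1)) ^ (r - 4) / ε ^ 2 := by
          gcongr with i
          have hpos : (0 : ℝ) < N + (i + 1) := by positivity
          rw [show ((i + N : ℕ) : ℝ) + 1 = N + (i + 1) by push_cast; ring]
          simpa [abs_of_pos hpos] using
            dispersionTerm_le_rpow_sub_four (r := r) hν.le hε hpos.ne'
      _ ≤ (N : ℝ) ^ (r - 3) / (3 - r) / ε ^ 2 := by
          rw [← sum_div, ← neg_sub r 3, show r - 4 = r - 3 - 1 by ring]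
          gcongr
          exact sum_range_add_add_one_rpow_sub_one_le (by linarith [hr.2]) (by positivity) m

lemma tsum_dispersionTerm_nat_succ_le_mul_rpow (hr : r ∈ Set.Ioo 1 3) (hν : 0 < ν)
    (hε : ε ∈ Set.Ioc 0 1) :
    ∑' n : ℕ, dispersionTerm r ν ε (n + 1) ≤
      (2 ^ (r - 1) * (1 / (r - 1) + 1) / ν + 1 / (3 - r)) * ε ^ (1 - r) := by
  obtain ⟨hε₀, hε₁⟩ := hε
  set N := ⌈ε⁻¹⌉₊
  have hN : 0 < N := Nat.ceil_pos.mpr (by positivity)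
  have hN_ge : ε⁻¹ ≤ N := Nat.le_ceil _
  have hN_le : (N : ℝ) ≤ 2 * ε⁻¹ :=
    Nat.ceil_le_two_mul (by rw [inv_le_inv₀ two_pos hε₀]; linarith)
  have head : (N : ℝ) ^ (r - 1) ≤ 2 ^ (r - 1) * ε ^ (1 - r) := calc
    _ ≤ (2 * ε⁻¹) ^ (r - 1) := rpow_le_rpow (by positivity) hN_le (by linarith [hr.1])
    _ = _ := by
      rw [mul_rpow two_pos.le (by positivity), inv_rpow hε₀.le, ← rpow_neg hε₀.le, neg_sub]
  have tail : (N : ℝ) ^ (r - 3) / ε ^ 2 ≤ ε ^ (1 - r) := calc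
    _ ≤ ε⁻¹ ^ (r - 3) / ε ^ 2 := by
      gcongr ?_ / _
      exact rpow_le_rpow_of_nonpos (by positivity) hN_ge (by linarith [hr.2])
    _ = ε ^ (1 - r) := by
      rw [inv_rpow hε₀.le, ← rpow_neg hε₀.le, ← rpow_natCast, ← rpow_sub hε₀]
      norm_num; ring_nf
  have hr₁ : 0 < 1 / (r - 1) := one_div_pos.mpr (by linarith [hr.1])
  have hr₃ : 0 < 3 - r := by linarith [hr.2]
  calc _ ≤ (1 / (r - 1) + 1) * (N : ℝ) ^ (r - 1) / ν + (N : ℝ) ^ (r - 3) / (3 - r) / ε ^ 2 :=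
        tsum_dispersionTerm_nat_succ_le_of_cutoff hr hν hε₀ hN
    _ ≤ (1 / (r - 1) + 1) * (2 ^ (r - 1) * ε ^ (1 - r)) / ν + ε ^ (1 - r) / (3 - r) := by
        rw [div_right_comm _ (3 - r)]
        gcongr
    _ = _ := by ring

end dispersionTerm

theorem stmt_10 (α : ℝ) (hα : α ∈ Set.Ioo (1 / 2 : ℝ) (3 / 2)) (ν : ℝ) (hν : 0 < ν) :
    ∃ C > 0, ∀ (ε : ℝ), ε ∈ Set.Ioc (0 : ℝ) 1 →
      ∑' k : {k : ℤ // k ≠ 0},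
          |((k : ℤ) : ℝ)| ^ (2 * α) / (1 + ν * ((k : ℤ) : ℝ) ^ 2 + ε ^ 2 * ((k : ℤ) : ℝ) ^ 4)
        ≤ C * ε ^ (1 - 2 * α) := by
  have hr : 2 * α ∈ Set.Ioo 1 3 := ⟨by linarith [hα.1], by linarith [hα.2]⟩
  have hr₁ : 0 < 1 / (2 * α - 1) := one_div_pos.mpr (by linarith [hr.1])
  have hr₃ : 0 < 1 / (3 - 2 * α) := one_div_pos.mpr (by linarith [hr.2])
  refine ⟨2 * (2 ^ (2 * α - 1) * (1 / (2 * α - 1) + 1) / ν + 1 / (3 - 2 * α)), by positivity,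
    fun ε hε => ?_⟩
  have hsplit := tsum_subtype_ne_zero_eq_two_nsmul_tsum_nat_succ
    (f := fun k : ℤ => dispersionTerm (2 * α) ν ε k) (fun k => by simpa using dispersionTerm_neg)
    (by simpa using dispersionTerm_zero (by linarith [hr.1]))
    (summable_dispersionTerm_int hr.2 hν.le hε.1)
  push_cast [nsmul_eq_mul] at hsplit
  calc _ = 2 * ∑' n : ℕ, dispersionTerm (2 * α) ν ε (n + 1) := hsplit
    _ ≤ _ := by
        rw [mul_assoc]
        gcongr
        exact tsum_dispersionTerm_nat_succ_le_mul_rpow hr hν hε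
end

section
/- Let ν > 0 and S_ε(t) be the Fourier multiplier semigroup with symbol e^{-(νk²+1+ε²k⁴)t} on the periodic Sobolev scale. For every α ≥ β and T > 0 there exists C such that ‖S_ε(t)u‖_{H^α} ≤ C·min(t^{(β−α)/2}, (ε²t)^{(β−α)/4})·‖u‖_{H^β} for all ε ∈ (0,1], t ∈ (0,T], u ∈ H^β. -/
/-!
On the Fourier side `S_ε(t)` multiplies the `k`-th coefficient by `e^{-λ_k t}` with
`λ_k = ν k² + 1 + ε² k⁴`, so it suffices to bound `(1 + k²)^(α-β) e^{-2 λ_k t}` by both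
`t^(β-α)` and `(ε² t)^((β-α)/2)`, uniformly in `k`. Both bounds come from `y^a e^{-s y} ≤ (a/s)^a`:
for the heat rate take `y = 1 + k²`, using `λ_k ≥ min ν 1 · (1 + k²)`; for the biharmonic rate take
`y = 1 + k⁴`, using `λ_k ≥ ε² (1 + k⁴)` (as `ε ≤ 1`) and `(1 + k²)² ≤ 2 (1 + k⁴)`.
-/

/-- Sobolev-type weighted square norm of a sequence of Fourier coefficients:
`‖u‖_{H^α}² = ∑ₖ (1+k²)^α |u_k|²`. -/
noncomputable def sobolevSq (α : ℝ) (u : ℤ → ℂ) : ℝ :=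
  ∑' k : ℤ, (1 + (k : ℝ) ^ 2) ^ α * ‖u k‖ ^ 2

open Real

lemma rpow_mul_exp_neg_mul_le {a s y : ℝ} (ha : 0 ≤ a) (hs : 0 < s) (hy : 0 < y) :
    y ^ a * exp (-(s * y)) ≤ (a / s) ^ a := by
  rcases ha.eq_or_lt with rfl | ha
  · simp only [rpow_zero, one_mul, exp_le_one_iff, neg_nonpos]
    positivity
  have hx : 0 < s * y / a := by positivity
  calc y ^ a * exp (-(s * y)) = (a / s) ^ a * ((s * y / a) ^ a * exp (-(s * y))) := by
        rw [← mul_assoc, ← mul_rpow (by positivity) hx.le]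
        field_simp
    _ ≤ (a / s) ^ a * (exp (s * y / a) ^ a * exp (-(s * y))) := by
        gcongr
        linarith [add_one_le_exp (s * y / a)]
    _ = (a / s) ^ a := by
        rw [← exp_mul, div_mul_cancel₀ _ ha.ne', ← exp_add, add_neg_cancel, exp_zero, mul_one]

lemma rpow_mul_exp_neg_le_of_mul_le {a c t w L : ℝ} (ha : 0 ≤ a) (hc : 0 < c) (ht : 0 < t)
    (hw : 0 < w) (hL : c * t * w ≤ L) :
    w ^ a * exp (-L) ≤ (a / c) ^ a * t ^ (-a) := by
  calc w ^ a * exp (-L) ≤ w ^ a * exp (-(c * t * w)) := by gcongr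
    _ ≤ (a / (c * t)) ^ a := rpow_mul_exp_neg_mul_le ha (by positivity) hw
    _ = (a / c) ^ a * t ^ (-a) := by
        rw [← div_div, div_eq_mul_inv _ t, mul_rpow (by positivity) (by positivity),
          inv_rpow ht.le, rpow_neg ht.le]

lemma sobolevSq_smul_le {α β K : ℝ} {m : ℤ → ℝ} {u : ℤ → ℂ}
    (hm : ∀ k : ℤ, (1 + (k : ℝ) ^ 2) ^ (α - β) * ‖m k‖ ^ 2 ≤ K)
    (hu : Summable fun k : ℤ => (1 + (k : ℝ) ^ 2) ^ β * ‖u k‖ ^ 2) :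
    sobolevSq α (fun k => m k • u k) ≤ K * sobolevSq β u := by
  have hpt : ∀ k : ℤ, (1 + (k : ℝ) ^ 2) ^ α * ‖m k • u k‖ ^ 2 ≤
      K * ((1 + (k : ℝ) ^ 2) ^ β * ‖u k‖ ^ 2) := by
    intro k
    have hy : (0 : ℝ) < 1 + (k : ℝ) ^ 2 := by positivity
    calc (1 + (k : ℝ) ^ 2) ^ α * ‖m k • u k‖ ^ 2
        = ((1 + (k : ℝ) ^ 2) ^ (α - β) * ‖m k‖ ^ 2) * ((1 + (k : ℝ) ^ 2) ^ β * ‖u k‖ ^ 2) := by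
          rw [norm_smul, rpow_sub hy]
          field_simp
      _ ≤ K * ((1 + (k : ℝ) ^ 2) ^ β * ‖u k‖ ^ 2) := by gcongr; exact hm k
  have hK := hu.mul_left K
  calc sobolevSq α (fun k => m k • u k)
      ≤ ∑' k : ℤ, K * ((1 + (k : ℝ) ^ 2) ^ β * ‖u k‖ ^ 2) :=
        (hK.of_nonneg_of_le (fun k => by positivity) hpt).tsum_le_tsum hpt hK
    _ = K * sobolevSq β u := tsum_mul_left

/-- The symbol of `-(ν ∂ₓ² - 1 - ε² ∂ₓ⁴)` at frequency `k`. -/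
noncomputable def dampedSymbol (ν ε k : ℝ) : ℝ := ν * k ^ 2 + 1 + ε ^ 2 * k ^ 4

lemma exp_neg_mul_sq (x t : ℝ) : exp (-x * t) ^ 2 = exp (-(2 * x * t)) := by
  rw [← exp_nat_mul]; ring_nf

lemma weighted_sq_exp_dampedSymbol_le_heat {ν ε t γ : ℝ} (hν : 0 < ν) (ht : 0 < t) (hγ : 0 ≤ γ)
    (k : ℝ) :
    (1 + k ^ 2) ^ γ * exp (-dampedSymbol ν ε k * t) ^ 2
      ≤ (γ / (2 * min ν 1)) ^ γ * t ^ (-γ) := by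
  have hsymb : min ν 1 * (1 + k ^ 2) ≤ dampedSymbol ν ε k := by
    have := min_le_left ν 1
    have := min_le_right ν 1
    unfold dampedSymbol
    nlinarith [sq_nonneg k, sq_nonneg (ε * k ^ 2)]
  rw [exp_neg_mul_sq]
  refine rpow_mul_exp_neg_le_of_mul_le hγ (by positivity) ht (by positivity) ?_
  calc 2 * min ν 1 * t * (1 + k ^ 2) = 2 * t * (min ν 1 * (1 + k ^ 2)) := by ring
    _ ≤ 2 * t * dampedSymbol ν ε k := by gcongr
    _ = 2 * dampedSymbol ν ε k * t := by ring

lemma weighted_sq_exp_dampedSymbol_le_biharmonic {ν ε t γ : ℝ} (hν : 0 ≤ ν) (hε : 0 < ε)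
    (hε1 : ε ≤ 1) (ht : 0 < t) (hγ : 0 ≤ γ) (k : ℝ) :
    (1 + k ^ 2) ^ γ * exp (-dampedSymbol ν ε k * t) ^ 2
      ≤ 2 ^ (γ / 2) * (γ / 4) ^ (γ / 2) * (ε ^ 2 * t) ^ (-(γ / 2)) := by
  have hweight : (1 + k ^ 2) ^ γ ≤ 2 ^ (γ / 2) * (1 + k ^ 4) ^ (γ / 2) := by
    calc (1 + k ^ 2) ^ γ = ((1 + k ^ 2) ^ 2) ^ (γ / 2) := by
          rw [← rpow_natCast_mul (by positivity)]; congr 1; push_cast; ring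
      _ ≤ (2 * (1 + k ^ 4)) ^ (γ / 2) := by gcongr; nlinarith [sq_nonneg (1 - k ^ 2)]
      _ = 2 ^ (γ / 2) * (1 + k ^ 4) ^ (γ / 2) := mul_rpow (by norm_num) (by positivity)
  have hsymb : ε ^ 2 * (1 + k ^ 4) ≤ dampedSymbol ν ε k := by
    have : ε ^ 2 ≤ 1 := pow_le_one₀ hε.le hε1
    unfold dampedSymbol
    nlinarith [mul_nonneg hν (sq_nonneg k)]
  have hdecay : (1 + k ^ 4) ^ (γ / 2) * exp (-dampedSymbol ν ε k * t) ^ 2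
      ≤ (γ / 4) ^ (γ / 2) * (ε ^ 2 * t) ^ (-(γ / 2)) := by
    rw [exp_neg_mul_sq, show γ / 4 = γ / 2 / 2 by ring]
    refine rpow_mul_exp_neg_le_of_mul_le (by positivity) two_pos (by positivity) (by positivity) ?_
    calc 2 * (ε ^ 2 * t) * (1 + k ^ 4) = 2 * t * (ε ^ 2 * (1 + k ^ 4)) := by ring
      _ ≤ 2 * t * dampedSymbol ν ε k := by gcongr
      _ = 2 * dampedSymbol ν ε k * t := by ring
  calc (1 + k ^ 2) ^ γ * exp (-dampedSymbol ν ε k * t) ^ 2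
      ≤ 2 ^ (γ / 2) * ((1 + k ^ 4) ^ (γ / 2) * exp (-dampedSymbol ν ε k * t) ^ 2) := by
        rw [← mul_assoc]; gcongr
    _ ≤ 2 ^ (γ / 2) * ((γ / 4) ^ (γ / 2) * (ε ^ 2 * t) ^ (-(γ / 2))) := by gcongr
    _ = _ := by ring

lemma le_sq_mul_min_of_le {x a b C₁ C₂ C : ℝ}
    (h₁ : x ≤ C₁ * a ^ 2) (h₂ : x ≤ C₂ * b ^ 2) (hC₁ : C₁ ≤ C ^ 2) (hC₂ : C₂ ≤ C ^ 2) :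
    x ≤ (C * min a b) ^ 2 := by
  rw [mul_pow]
  rcases min_cases a b with ⟨hab, -⟩ | ⟨hab, -⟩ <;> rw [hab]
  · exact h₁.trans (by gcongr)
  · exact h₂.trans (by gcongr)

theorem stmt_15_general (ν : ℝ) (hν : 0 < ν) (α β : ℝ) (hαβ : β ≤ α) (T : ℝ) :
    ∃ C > 0, ∀ ε ∈ Set.Ioc (0 : ℝ) 1, ∀ t ∈ Set.Ioc (0 : ℝ) T, ∀ u : ℤ → ℂ,
      Summable (fun k : ℤ => (1 + (k : ℝ) ^ 2) ^ β * ‖u k‖ ^ 2) →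
      sobolevSq α (fun k =>
          Real.exp (-(ν * (k : ℝ) ^ 2 + 1 + ε ^ 2 * (k : ℝ) ^ 4) * t) • u k)
        ≤ (C * min (t ^ ((β - α) / 2)) ((ε ^ 2 * t) ^ ((β - α) / 4))) ^ 2
            * sobolevSq β u := by
  have hγ : 0 ≤ α - β := sub_nonneg.mpr hαβ
  set C₁ := ((α - β) / (2 * min ν 1)) ^ (α - β)
  set C₂ := 2 ^ ((α - β) / 2) * ((α - β) / 4) ^ ((α - β) / 2)
  have hC₁ : 0 ≤ C₁ := by positivity
  have hC₂ : 0 ≤ C₂ := by positivity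
  refine ⟨C₁ + C₂ + 1, by positivity, ?_⟩
  rintro ε ⟨hε, hε1⟩ t ⟨ht, -⟩ u hu
  have hεt : 0 < ε ^ 2 * t := by positivity
  refine sobolevSq_smul_le (fun k => ?_) hu
  rw [norm_of_nonneg (exp_pos _).le]
  refine le_sq_mul_min_of_le (C₁ := C₁) (C₂ := C₂) ?_ ?_ (by nlinarith) (by nlinarith)
  · refine (weighted_sq_exp_dampedSymbol_le_heat hν ht hγ k).trans_eq ?_
    rw [← rpow_mul_natCast ht.le]
    congr 2; push_cast; ring
  · refine (weighted_sq_exp_dampedSymbol_le_biharmonic hν.le hε hε1 ht hγ k).trans_eq ?_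
    rw [← rpow_mul_natCast hεt.le]
    congr 2; push_cast; ring

theorem stmt_15 (ν : ℝ) (hν : 0 < ν) (α β : ℝ) (hαβ : β ≤ α) (T : ℝ) (hT : 0 < T) :
    ∃ C > 0, ∀ ε ∈ Set.Ioc (0 : ℝ) 1, ∀ t ∈ Set.Ioc (0 : ℝ) T, ∀ u : ℤ → ℂ,
      Summable (fun k : ℤ => (1 + (k : ℝ) ^ 2) ^ β * ‖u k‖ ^ 2) →
      sobolevSq α (fun k =>
          Real.exp (-(ν * (k : ℝ) ^ 2 + 1 + ε ^ 2 * (k : ℝ) ^ 4) * t) • u k)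
        ≤ (C * min (t ^ ((β - α) / 2)) ((ε ^ 2 * t) ^ ((β - α) / 4))) ^ 2
            * sobolevSq β u :=
  stmt_15_general ν hν α β hαβ T
end
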